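/- Let f, g : ℝ → [0, ∞) be integrable log-concave functions. Then their convolution h(x) = ∫_ℝ f(x − y) g(y) dy is log-concave on ℝ: for all x₁, x₂ ∈ ℝ and all t ∈ [0, 1], h(t x₁ + (1 − t) x₂) ≥ h(x₁)^t · h(x₂)^{1−t}. -/

import Mathlib

/-!
By Prékopa–Leindler, the integrands `y ↦ f (xᵢ - y) * g y` of `h x₁`, `h x₂` and
`h (t * x₁ + (1 - t) * x₂)` satisfy `F y ^ t * G z ^ (1 - t) ≤ H (t * y + (1 - t) * z)` by
log-concavity of `f` and `g`, so their integrals satisfy the same inequality.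

In dimension one, Prékopa–Leindler follows, once the suprema of `F` and `G` are normalised to `1`,
from the layer-cake formula and the Brunn–Minkowski inequality `|A| + |B| ≤ |A + B|` for the
superlevel sets. For compact sets the latter holds because `A + {inf B}` and `{sup A} + B` are
translates of `A` and `B` inside `A + B` meeting in a single point; inner regularity extends it.

The normalisation needs bounded integrands: an integrable log-concave function is bounded. Indeed,
if `0 < f y ≤ f w`, then `f ≥ √(f w * f y)` on the half of the segment `[y, w]` next to `w`; taking
for `y` whichever of two fixed points of positivity is farther from `w`, the integral of `f`
bounds `f w`.
-/

open MeasureTheory Set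
open scoped ENNReal Pointwise

theorem IsCompact.volume_add_volume_le {K L : Set ℝ} (hK : IsCompact K) (hL : IsCompact L)
    (hK' : K.Nonempty) (hL' : L.Nonempty) : volume K + volume L ≤ volume (K + L) := by
  set a := sSup K
  set b := sInf L
  have haK : a ∈ K := hK.sSup_mem hK'
  have hbL : b ∈ L := hL.sInf_mem hL'
  have hS : volume (K + {b}) = volume K := by
    rw [add_singleton, image_add_right, measure_preimage_add_right]
  have hT : volume ({a} + L) = volume L := by
    rw [singleton_add, image_add_left, measure_preimage_add]
  have hST : (K + {b}) ∪ ({a} + L) ⊆ K + L :=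
    union_subset (add_subset_add_left (singleton_subset_iff.2 hbL))
      (add_subset_add_right (singleton_subset_iff.2 haK))
  have hinter : (K + {b}) ∩ ({a} + L) ⊆ {a + b} := by
    rintro _ ⟨⟨u, hu, _, rfl, rfl⟩, ⟨_, rfl, v, hv, huv⟩⟩
    have hua : u ≤ a := le_csSup hK.bddAbove hu
    have hbv : b ≤ v := csInf_le hL.bddBelow hv
    rw [mem_singleton_iff]
    linarith
  calc volume K + volume L = volume (K + {b}) + volume ({a} + L) := by rw [hS, hT]
    _ = volume ((K + {b}) ∪ ({a} + L)) :=
      (measure_union₀ (isCompact_singleton.add hL).isClosed.measurableSet.nullMeasurableSet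
        (measure_mono_null hinter (measure_singleton _))).symm
    _ ≤ volume (K + L) := measure_mono hST

theorem MeasureTheory.NullMeasurableSet.measure_eq_iSup_isCompact_nonempty {α : Type*}
    [TopologicalSpace α] [MeasurableSpace α] {μ : Measure α} [μ.InnerRegular] {A : Set α}
    (hA : NullMeasurableSet A μ) (hA' : A.Nonempty) :
    μ A = ⨆ K ∈ {K | K ⊆ A ∧ IsCompact K ∧ K.Nonempty}, μ K := by
  obtain ⟨a, ha⟩ := hA'
  obtain ⟨A₀, hA₀A, hA₀, hA₀ae⟩ := hA.exists_measurable_subset_ae_eq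
  refine le_antisymm ?_ (iSup₂_le fun K hK => measure_mono hK.1)
  rw [← measure_congr hA₀ae, hA₀.measure_eq_iSup_isCompact]
  refine iSup₂_le fun K hK => iSup_le fun hKc => ?_
  -- a compact subset of `A₀` may be empty; adjoining a point of `A` does not decrease its measure
  exact le_iSup₂_of_le (insert a K) ⟨insert_subset ha (hK.trans hA₀A), hKc.insert a,
    insert_nonempty a K⟩ (measure_mono (subset_insert a K))

theorem ofReal_mul_volume_add_ofReal_mul_volume_le {A B : Set ℝ} (hA : NullMeasurableSet A)
    (hB : NullMeasurableSet B) (hA' : A.Nonempty) (hB' : B.Nonempty) {a b : ℝ} (ha : 0 ≤ a)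
    (hb : 0 ≤ b) :
    ENNReal.ofReal a * volume A + ENNReal.ofReal b * volume B ≤ volume (a • A + b • B) := by
  rw [hA.measure_eq_iSup_isCompact_nonempty hA', hB.measure_eq_iSup_isCompact_nonempty hB']
  simp only [ENNReal.mul_iSup]
  refine ENNReal.biSup_add_biSup_le ?_ ?_ fun K ⟨hKA, hK, hK'⟩ L ⟨hLB, hL, hL'⟩ => ?_
  · exact ⟨_, singleton_subset_iff.2 hA'.some_mem, isCompact_singleton, singleton_nonempty _⟩
  · exact ⟨_, singleton_subset_iff.2 hB'.some_mem, isCompact_singleton, singleton_nonempty _⟩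
  calc ENNReal.ofReal a * volume K + ENNReal.ofReal b * volume L
      = volume (a • K) + volume (b • L) := by
        rw [Measure.addHaar_smul_of_nonneg _ ha, Measure.addHaar_smul_of_nonneg _ hb,
          Module.finrank_self, pow_one, pow_one]
    _ ≤ volume (a • K + b • L) :=
        (hK.smul a).volume_add_volume_le (hL.smul b) (hK'.smul_set) (hL'.smul_set)
    _ ≤ volume (a • A + b • B) :=
        measure_mono (add_subset_add (smul_set_mono hKA) (smul_set_mono hLB))

theorem mul_rpow_mul_mul_rpow {a b p q : ℝ} (ha : 0 ≤ a) (hb : 0 ≤ b) (hp : 0 ≤ p) (hq : 0 ≤ q)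
    (t : ℝ) : (a * p) ^ t * (b * q) ^ (1 - t) = a ^ t * b ^ (1 - t) * (p ^ t * q ^ (1 - t)) := by
  rw [Real.mul_rpow ha hp, Real.mul_rpow hb hq]
  ring

theorem isLUB_range_inv_mul_one {K : ℝ → ℝ} (hK : BddAbove (range K)) (hK0 : 0 < sSup (range K)) :
    IsLUB (range fun y => (sSup (range K))⁻¹ * K y) 1 := by
  rw [range_comp', ← inv_mul_cancel₀ hK0.ne']
  exact (isLUB_csSup (range_nonempty K) hK).mul_left (inv_nonneg.2 hK0.le)

section PrekopaLeindler

variable {F G H : ℝ → ℝ} {t : ℝ}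

theorem ofReal_mul_volume_superlevel_add_le (ht0 : 0 < t) (ht1 : t ≤ 1) {s : ℝ} (hs : 0 < s)
    (hF : AEMeasurable F) (hG : AEMeasurable G) (hFs : ∃ y, s < F y) (hGs : ∃ z, s < G z)
    (hFGH : ∀ y z, F y ^ t * G z ^ (1 - t) ≤ H (t * y + (1 - t) * z)) :
    ENNReal.ofReal t * volume {y | s < F y} + ENNReal.ofReal (1 - t) * volume {z | s < G z}
      ≤ volume {x | s < H x} := by
  refine (ofReal_mul_volume_add_ofReal_mul_volume_le (nullMeasurableSet_lt aemeasurable_const hF)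
    (nullMeasurableSet_lt aemeasurable_const hG) hFs hGs ht0.le (sub_nonneg.2 ht1)).trans
    (measure_mono ?_)
  rintro _ ⟨_, ⟨y, hsy, rfl⟩, _, ⟨z, hsz, rfl⟩, rfl⟩
  have hy : s ^ t < F y ^ t := Real.rpow_lt_rpow hs.le hsy ht0
  have hz : s ^ (1 - t) ≤ G z ^ (1 - t) := Real.rpow_le_rpow hs.le hsz.le (sub_nonneg.2 ht1)
  calc s = s ^ t * s ^ (1 - t) := by rw [← Real.rpow_add hs, add_sub_cancel, Real.rpow_one]
    _ < F y ^ t * G z ^ (1 - t) := mul_lt_mul hy hz (Real.rpow_pos_of_pos hs _)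
      (Real.rpow_nonneg (hs.trans hsy).le _)
    _ ≤ H (t * y + (1 - t) * z) := hFGH y z

theorem lintegral_prekopa_leindler_of_isLUB_one (ht0 : 0 < t) (ht1 : t ≤ 1)
    (hF0 : ∀ y, 0 ≤ F y) (hG0 : ∀ y, 0 ≤ G y) (hH0 : ∀ y, 0 ≤ H y)
    (hF : AEMeasurable F) (hG : AEMeasurable G) (hH : AEMeasurable H)
    (hFsup : IsLUB (range F) 1) (hGsup : IsLUB (range G) 1)
    (hFGH : ∀ y z, F y ^ t * G z ^ (1 - t) ≤ H (t * y + (1 - t) * z)) :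
    ENNReal.ofReal t * (∫⁻ y, ENNReal.ofReal (F y))
      + ENNReal.ofReal (1 - t) * ∫⁻ y, ENNReal.ofReal (G y) ≤ ∫⁻ y, ENNReal.ofReal (H y) := by
  have key : ∀ s ∈ Ioi (0 : ℝ), ENNReal.ofReal t * volume {y | s < F y}
      + ENNReal.ofReal (1 - t) * volume {y | s < G y} ≤ volume {y | s < H y} := by
    intro s (hs : 0 < s)
    rcases lt_or_ge s 1 with hs1 | hs1
    · obtain ⟨_, ⟨y, rfl⟩, hy, -⟩ := hFsup.exists_between hs1
      obtain ⟨_, ⟨z, rfl⟩, hz, -⟩ := hGsup.exists_between hs1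
      exact ofReal_mul_volume_superlevel_add_le ht0 ht1 hs hF hG ⟨y, hy⟩ ⟨z, hz⟩ hFGH
    · have hF_empty : {y | s < F y} = ∅ :=
        eq_empty_of_forall_notMem fun y hy => (hFsup.1 ⟨y, rfl⟩).not_gt (hs1.trans_lt hy)
      have hG_empty : {y | s < G y} = ∅ :=
        eq_empty_of_forall_notMem fun y hy => (hGsup.1 ⟨y, rfl⟩).not_gt (hs1.trans_lt hy)
      simp [hF_empty, hG_empty]
  rw [lintegral_eq_lintegral_meas_lt _ (ae_of_all _ hF0) hF,
    lintegral_eq_lintegral_meas_lt _ (ae_of_all _ hG0) hG,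
    lintegral_eq_lintegral_meas_lt _ (ae_of_all _ hH0) hH,
    ← lintegral_const_mul' _ _ ENNReal.ofReal_ne_top,
    ← lintegral_const_mul' _ _ ENNReal.ofReal_ne_top]
  exact (le_lintegral_add _ _).trans (setLIntegral_mono' measurableSet_Ioi key)

theorem prekopa_leindler_of_isLUB_one (ht0 : 0 < t) (ht1 : t ≤ 1)
    (hF0 : ∀ y, 0 ≤ F y) (hG0 : ∀ y, 0 ≤ G y) (hH0 : ∀ y, 0 ≤ H y)
    (hF : Integrable F) (hG : Integrable G) (hH : Integrable H)
    (hFsup : IsLUB (range F) 1) (hGsup : IsLUB (range G) 1)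
    (hFGH : ∀ y z, F y ^ t * G z ^ (1 - t) ≤ H (t * y + (1 - t) * z)) :
    t * (∫ y, F y) + (1 - t) * (∫ y, G y) ≤ ∫ y, H y := by
  have h := lintegral_prekopa_leindler_of_isLUB_one ht0 ht1 hF0 hG0 hH0 hF.aemeasurable
    hG.aemeasurable hH.aemeasurable hFsup hGsup hFGH
  rw [← ofReal_integral_eq_lintegral_ofReal hF (ae_of_all _ hF0),
    ← ofReal_integral_eq_lintegral_ofReal hG (ae_of_all _ hG0),
    ← ofReal_integral_eq_lintegral_ofReal hH (ae_of_all _ hH0),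
    ← ENNReal.ofReal_mul ht0.le, ← ENNReal.ofReal_mul (sub_nonneg.2 ht1),
    ← ENNReal.ofReal_add (mul_nonneg ht0.le (integral_nonneg hF0))
      (mul_nonneg (sub_nonneg.2 ht1) (integral_nonneg hG0))] at h
  exact (ENNReal.ofReal_le_ofReal_iff (integral_nonneg hH0)).1 h

theorem prekopa_leindler (ht0 : 0 < t) (ht1 : t < 1)
    (hF0 : ∀ y, 0 ≤ F y) (hG0 : ∀ y, 0 ≤ G y) (hH0 : ∀ y, 0 ≤ H y)
    (hF : Integrable F) (hG : Integrable G) (hH : Integrable H)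
    (hFb : BddAbove (range F)) (hGb : BddAbove (range G))
    (hFGH : ∀ y z, F y ^ t * G z ^ (1 - t) ≤ H (t * y + (1 - t) * z)) :
    (∫ y, F y) ^ t * (∫ y, G y) ^ (1 - t) ≤ ∫ y, H y := by
  set MF := sSup (range F)
  set MG := sSup (range G)
  have hFle : ∀ y, F y ≤ MF := fun y => le_csSup hFb ⟨y, rfl⟩
  have hGle : ∀ y, G y ≤ MG := fun y => le_csSup hGb ⟨y, rfl⟩
  rcases ((hF0 0).trans (hFle 0)).eq_or_lt with hMF | hMF
  · have hF_zero : ∀ y, F y = 0 := fun y => le_antisymm (hMF ▸ hFle y) (hF0 y)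
    simpa [hF_zero, Real.zero_rpow ht0.ne'] using integral_nonneg hH0
  rcases ((hG0 0).trans (hGle 0)).eq_or_lt with hMG | hMG
  · have hG_zero : ∀ y, G y = 0 := fun y => le_antisymm (hMG ▸ hGle y) (hG0 y)
    simpa [hG_zero, Real.zero_rpow (sub_pos.2 ht1).ne'] using integral_nonneg hH0
  set c := MF ^ t * MG ^ (1 - t)
  have hc : 0 < c := by positivity
  have hc_inv : MF⁻¹ ^ t * MG⁻¹ ^ (1 - t) = c⁻¹ := by
    rw [Real.inv_rpow hMF.le, Real.inv_rpow hMG.le, mul_inv]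
  have h := prekopa_leindler_of_isLUB_one ht0 ht1.le (F := fun y => MF⁻¹ * F y)
    (G := fun y => MG⁻¹ * G y) (H := fun y => c⁻¹ * H y)
    (fun y => mul_nonneg (inv_nonneg.2 hMF.le) (hF0 y))
    (fun y => mul_nonneg (inv_nonneg.2 hMG.le) (hG0 y))
    (fun y => mul_nonneg (inv_nonneg.2 hc.le) (hH0 y))
    (hF.const_mul _) (hG.const_mul _) (hH.const_mul _)
    (isLUB_range_inv_mul_one hFb hMF) (isLUB_range_inv_mul_one hGb hMG) fun y z => by
      rw [mul_rpow_mul_mul_rpow (by positivity) (by positivity) (hF0 y) (hG0 z), hc_inv]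
      exact mul_le_mul_of_nonneg_left (hFGH y z) (by positivity)
  simp only [integral_const_mul] at h
  calc (∫ y, F y) ^ t * (∫ y, G y) ^ (1 - t)
      = c * ((MF⁻¹ * ∫ y, F y) ^ t * (MG⁻¹ * ∫ y, G y) ^ (1 - t)) := by
        rw [mul_rpow_mul_mul_rpow (by positivity) (by positivity) (integral_nonneg hF0)
          (integral_nonneg hG0), hc_inv, mul_inv_cancel_left₀ hc.ne']
    _ ≤ c * (t * (MF⁻¹ * ∫ y, F y) + (1 - t) * (MG⁻¹ * ∫ y, G y)) := by
        gcongr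
        exact Real.geom_mean_le_arith_mean2_weighted ht0.le (sub_pos.2 ht1).le
          (mul_nonneg (inv_nonneg.2 hMF.le) (integral_nonneg hF0))
          (mul_nonneg (inv_nonneg.2 hMG.le) (integral_nonneg hG0)) (add_sub_cancel _ _)
    _ ≤ c * (c⁻¹ * ∫ y, H y) := by gcongr
    _ = ∫ y, H y := mul_inv_cancel_left₀ hc.ne' _

end PrekopaLeindler

def LogConcave (f : ℝ → ℝ) : Prop :=
  ∀ x y t : ℝ, 0 ≤ t → t ≤ 1 → f x ^ t * f y ^ (1 - t) ≤ f (t * x + (1 - t) * y)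

namespace LogConcave

variable {f g : ℝ → ℝ}

theorem sqrt_mul_le (hf : LogConcave f) {x y s : ℝ} (hy : 0 < f y) (hyx : f y ≤ f x)
    (hs : 1 / 2 ≤ s) (hs1 : s ≤ 1) : √(f x * f y) ≤ f (s * x + (1 - s) * y) := by
  have hx : 0 < f x := hy.trans_le hyx
  calc √(f x * f y) ≤ f x ^ s * f y ^ (1 - s) := by
        rw [Real.sqrt_eq_rpow, Real.rpow_def_of_pos (mul_pos hx hy), Real.rpow_def_of_pos hx,
          Real.rpow_def_of_pos hy, ← Real.exp_add, Real.log_mul hx.ne' hy.ne', Real.exp_le_exp]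
        nlinarith [Real.log_le_log hy hyx]
    _ ≤ f (s * x + (1 - s) * y) := hf x y s (by linarith) hs1

theorem sqrt_mul_mul_le_integral (hf : LogConcave f) (hf0 : ∀ x, 0 ≤ f x) (hfi : Integrable f)
    {x y : ℝ} (hy : 0 < f y) (hyx : f y ≤ f x) : √(f x * f y) * (|x - y| / 2) ≤ ∫ z, f z := by
  have hJ : ∀ z ∈ uIcc ((x + y) / 2) x, √(f x * f y) ≤ f z := by
    intro z hz
    rw [← segment_eq_uIcc] at hz
    obtain ⟨a, b, ha, hb, hab, rfl⟩ := hz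
    convert hf.sqrt_mul_le (s := 1 - a / 2) hy hyx (by linarith) (by linarith) using 2
    simp only [smul_eq_mul]
    linear_combination x * hab
  calc √(f x * f y) * (|x - y| / 2) = ∫ _ in uIcc ((x + y) / 2) x, √(f x * f y) := by
        rw [setIntegral_const, measureReal_def, Real.volume_interval,
          ENNReal.toReal_ofReal (abs_nonneg _), smul_eq_mul,
          show x - (x + y) / 2 = (x - y) / 2 by ring, abs_div, abs_two, mul_comm]
    _ ≤ ∫ z in uIcc ((x + y) / 2) x, f z :=
        setIntegral_mono_on (integrableOn_const (by simp [Real.volume_interval]))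
          hfi.integrableOn measurableSet_uIcc hJ
    _ ≤ ∫ z, f z := setIntegral_le_integral hfi (ae_of_all _ hf0)

theorem bddAbove (hf : LogConcave f) (hf0 : ∀ x, 0 ≤ f x) (hfi : Integrable f) :
    BddAbove (range f) := by
  by_contra hunb
  rw [not_bddAbove_iff] at hunb
  obtain ⟨_, ⟨a, rfl⟩, ha⟩ := hunb 0
  obtain ⟨_, ⟨b, rfl⟩, hab⟩ := hunb (f a)
  have hba : 0 < |b - a| := abs_pos.2 (sub_ne_zero.2 fun h => (h ▸ hab).false)
  set C := 4 * (∫ z, f z) / |b - a|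
  have hC : 0 ≤ C := div_nonneg (mul_nonneg zero_le_four (integral_nonneg hf0)) hba.le
  have key : ∀ w, f b ≤ f w → f w * f a ≤ C ^ 2 := by
    intro w hw
    obtain ⟨y, hay, hyw, hdist⟩ : ∃ y, f a ≤ f y ∧ f y ≤ f w ∧ |b - a| / 2 ≤ |w - y| := by
      rcases le_total (|b - a| / 2) |w - a| with h | h
      · exact ⟨a, le_rfl, hab.le.trans hw, h⟩
      · refine ⟨b, hab.le, hw, ?_⟩
        have := abs_sub_le b w a
        rw [abs_sub_comm b w] at this
        linarith
    rw [← Real.sqrt_le_left hC, le_div_iff₀ hba]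
    calc √(f w * f a) * |b - a| = 4 * (√(f w * f a) * (|b - a| / 2 / 2)) := by ring
      _ ≤ 4 * (√(f w * f y) * (|w - y| / 2)) := by gcongr; exact hf0 w
      _ ≤ 4 * ∫ z, f z := by
        gcongr
        exact hf.sqrt_mul_mul_le_integral hf0 hfi (ha.trans_le hay) hyw
  obtain ⟨_, ⟨w, rfl⟩, hw⟩ := hunb (max (f b) (C ^ 2 / f a))
  have hw_large : C ^ 2 < f w * f a := (div_lt_iff₀ ha).1 ((le_max_right _ _).trans_lt hw)
  exact hw_large.not_ge (key w ((le_max_left _ _).trans hw.le))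

theorem geom_mean_conv_integrand_le (hf : LogConcave f) (hg : LogConcave g)
    (hf0 : ∀ x, 0 ≤ f x) (hg0 : ∀ x, 0 ≤ g x) {t : ℝ} (ht0 : 0 ≤ t) (ht1 : t ≤ 1)
    (x₁ x₂ y z : ℝ) :
    (f (x₁ - y) * g y) ^ t * (f (x₂ - z) * g z) ^ (1 - t)
      ≤ f (t * x₁ + (1 - t) * x₂ - (t * y + (1 - t) * z)) * g (t * y + (1 - t) * z) := by
  rw [mul_rpow_mul_mul_rpow (hf0 _) (hf0 _) (hg0 _) (hg0 _)]
  have hf' := hf (x₁ - y) (x₂ - z) t ht0 ht1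
  rw [show t * (x₁ - y) + (1 - t) * (x₂ - z) = t * x₁ + (1 - t) * x₂ - (t * y + (1 - t) * z) by
    ring] at hf'
  exact mul_le_mul hf' (hg y z t ht0 ht1)
    (mul_nonneg (Real.rpow_nonneg (hg0 _) _) (Real.rpow_nonneg (hg0 _) _))
    ((mul_nonneg (Real.rpow_nonneg (hf0 _) _) (Real.rpow_nonneg (hf0 _) _)).trans hf')

end LogConcave

/-- The convolution `h(x) = ∫ f(x - y) g(y) dy` of two integrable, nonnegative,
log-concave functions on `ℝ` is log-concave. -/
theorem convolution_logConcave
    (f g : ℝ → ℝ)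
    (hf0 : ∀ x, 0 ≤ f x) (hg0 : ∀ x, 0 ≤ g x)
    (hfi : Integrable f) (hgi : Integrable g)
    (hflc : ∀ x y t : ℝ, 0 ≤ t → t ≤ 1 →
      f x ^ t * f y ^ (1 - t) ≤ f (t * x + (1 - t) * y))
    (hglc : ∀ x y t : ℝ, 0 ≤ t → t ≤ 1 →
      g x ^ t * g y ^ (1 - t) ≤ g (t * x + (1 - t) * y))
    (h : ℝ → ℝ) (hh : ∀ x, h x = ∫ y, f (x - y) * g y) :
    ∀ x₁ x₂ t : ℝ, 0 ≤ t → t ≤ 1 →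
      h x₁ ^ t * h x₂ ^ (1 - t) ≤ h (t * x₁ + (1 - t) * x₂) := by
  intro x₁ x₂ t ht0 ht1
  rcases ht0.eq_or_lt with rfl | ht0
  · simp
  rcases ht1.eq_or_lt with rfl | ht1
  · simp
  obtain ⟨Mf, hMf⟩ := LogConcave.bddAbove hflc hf0 hfi
  obtain ⟨Mg, hMg⟩ := LogConcave.bddAbove hglc hg0 hgi
  have integrand_nonneg (x y : ℝ) : 0 ≤ f (x - y) * g y := mul_nonneg (hf0 _) (hg0 _)
  have integrand_integrable (x : ℝ) : Integrable fun y => f (x - y) * g y :=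
    hgi.bdd_mul (hfi.comp_sub_left x).aestronglyMeasurable
      (ae_of_all _ fun y => (Real.norm_of_nonneg (hf0 _)).trans_le (hMf ⟨_, rfl⟩))
  have integrand_bddAbove (x : ℝ) : BddAbove (range fun y => f (x - y) * g y) := by
    refine ⟨Mf * Mg, ?_⟩
    rintro _ ⟨y, rfl⟩
    exact mul_le_mul (hMf ⟨_, rfl⟩) (hMg ⟨_, rfl⟩) (hg0 y) ((hf0 _).trans (hMf ⟨x - y, rfl⟩))
  rw [hh, hh, hh]
  exact prekopa_leindler ht0 ht1 (integrand_nonneg x₁) (integrand_nonneg x₂) (integrand_nonneg _)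
    (integrand_integrable _) (integrand_integrable _) (integrand_integrable _)
    (integrand_bddAbove x₁) (integrand_bddAbove x₂)
    (LogConcave.geom_mean_conv_integrand_le hflc hglc hf0 hg0 ht0.le ht1.le x₁ x₂)
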